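/- Let G be a finite simple graph whose edge set carries a linear order, let e be the minimum edge of G, and let X be a subset of the edge set of G with e ∈ X. If X includes no broken circuit of G, then X \ {e} includes no broken circuit of the contracted graph G|_e. -/

import Mathlib

attribute [-instance] Sym2.instPartialOrder

open SimpleGraph

/-- `B` is a broken circuit of the simple graph `G` (whose edges are compared via the
linear order on `Sym2 V`): `B` is obtained from the edge set of a cycle of `G` by
removing its maximum edge. -/
def IsBrokenCircuit {V : Type*} [LinearOrder (Sym2 V)] (G : SimpleGraph V)
    (B : Set (Sym2 V)) : Prop :=
  ∃ (u : V) (w : G.Walk u u), w.IsCycle ∧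
    ∃ fm ∈ w.edges, (∀ g ∈ w.edges, g ≤ fm) ∧ B = {g | g ∈ w.edges} \ {fm}

/-- `{e, f, h}` is the edge set of a triangle in `G`. -/
def IsTriangleEdges {V : Type*} (G : SimpleGraph V) (e f h : Sym2 V) : Prop :=
  ∃ x y z : V, G.Adj x y ∧ G.Adj y z ∧ G.Adj z x ∧
    e = s(x, y) ∧ f = s(y, z) ∧ h = s(z, x)

/-- The vertex map contracting the edge `s(a, b)`: it identifies `b` with `a`. -/
def contractMap {V : Type*} [DecidableEq V] (a b : V) : V → V :=
  fun v => if v = b then a else v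

/-- The simple graph obtained from `G` by contracting the edge `s(a, b)`
(identifying `b` with `a`); parallel edges arising from the contraction are merged. -/
def contractGraph {V : Type*} [DecidableEq V] (G : SimpleGraph V) (a b : V) :
    SimpleGraph V where
  Adj x y := x ≠ y ∧ ∃ f ∈ G.edgeSet, f ≠ s(a, b) ∧
    Sym2.map (contractMap a b) f = s(x, y)
  symm := by
    constructor
    rintro x y ⟨hxy, f, hf, hfe, hmap⟩
    exact ⟨hxy.symm, f, hf, hfe, by rw [hmap, Sym2.eq_swap]⟩
  loopless := by constructor; rintro x ⟨h, -⟩; exact h rfl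

/-- `f` belongs to the edge set of `G|ₑ` (for `e = s(a, b)`), viewed as a subset of
the edge set of `G`: `f` is an edge of `G` other than `e` and there is no edge `h > f`
such that `{e, f, h}` is the edge set of a triangle in `G` (i.e. `f` is the maximum
edge in its parallel class after contraction of `e`). -/
def IsContractEdge {V : Type*} [LinearOrder (Sym2 V)] (G : SimpleGraph V)
    (e f : Sym2 V) : Prop :=
  f ∈ G.edgeSet ∧ f ≠ e ∧ ∀ h : Sym2 V, f < h → ¬ IsTriangleEdges G e f h

/-- `B` is a broken circuit of the contraction `G|ₑ` (with `e = s(a, b)`), expressed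
via the identification of the edge set of `G|ₑ` with a subset of the edge set of `G`:
there is a cycle `w` of the contracted simple graph such that, with
`S ⊆ E(G)` the set of representatives of the edges of `w`, `B = S \ {max S}`. -/
def IsContractBrokenCircuit {V : Type*} [DecidableEq V] [LinearOrder (Sym2 V)]
    (G : SimpleGraph V) (a b : V) (B : Set (Sym2 V)) : Prop :=
  ∃ (u : V) (w : (contractGraph G a b).Walk u u), w.IsCycle ∧
    ∃ S : Set (Sym2 V),
      (∀ f, f ∈ S ↔ IsContractEdge G s(a, b) f ∧
        Sym2.map (contractMap a b) f ∈ w.edges) ∧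
      ∃ fm ∈ S, (∀ g ∈ S, g ≤ fm) ∧ B = S \ {fm}

section Aux

variable {V : Type*} [DecidableEq V]

lemma contractMap_a (a b : V) : contractMap a b a = a := by
  unfold contractMap; split <;> simp_all

lemma contractMap_b (a b : V) : contractMap a b b = a := by
  simp [contractMap]

lemma fiber_eq {a b x y : V} (h : contractMap a b x = contractMap a b y) :
    x = y ∨ s(x, y) = s(a, b) := by
  unfold contractMap at h
  split_ifs at h with h1 h2 h2
  · subst h1; subst h2; exact Or.inl rfl
  · subst h1; subst h; exact Or.inr Sym2.eq_swap.symm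
  · subst h2; subst h; exact Or.inr rfl
  · exact Or.inl h

lemma fiber_reachable {H : SimpleGraph V} {a b : V} (heH : H.Adj a b) {x' y' : V}
    (h : contractMap a b x' = contractMap a b y') : H.Reachable x' y' := by
  rcases fiber_eq h with rfl | h
  · exact SimpleGraph.Reachable.refl x'
  · rcases Sym2.eq_iff.mp h with ⟨rfl, rfl⟩ | ⟨rfl, rfl⟩
    · exact heH.reachable
    · exact heH.symm.reachable

lemma lift_reachable {G H : SimpleGraph V} {a b : V} (heH : H.Adj a b) :
    ∀ {x y : V} (p : (contractGraph G a b).Walk x y),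
      (∀ g ∈ p.edges, ∃ f ∈ H.edgeSet, Sym2.map (contractMap a b) f = g) →
      ∀ x' y', contractMap a b x' = x → contractMap a b y' = y → H.Reachable x' y' := by
  intro x y p
  induction p with
  | nil =>
    intro _ x' y' hx hy
    exact fiber_reachable heH (hx.trans hy.symm)
  | @cons x z y hadj q ih =>
    intro hrep x' y' hx hy
    obtain ⟨f, hfH, hfmap⟩ := hrep s(x, z) (by simp)
    have hrest : ∀ g ∈ q.edges, ∃ f ∈ H.edgeSet, Sym2.map (contractMap a b) f = g :=
      fun g hg => hrep g (by simp [hg])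
    revert hfH hfmap
    induction f using Sym2.ind with
    | _ x₁ z₁ =>
      intro hfH hfmap
      rw [Sym2.map_pair_eq, Sym2.eq_iff] at hfmap
      rcases hfmap with ⟨hx1, hz1⟩ | ⟨hx1, hz1⟩
      · have r1 : H.Reachable x' x₁ := fiber_reachable heH (by rw [hx, hx1])
        have hadj1 : H.Adj x₁ z₁ := (SimpleGraph.mem_edgeSet _).mp hfH
        exact r1.trans (hadj1.reachable.trans (ih hrest z₁ y' hz1 hy))
      · have r1 : H.Reachable x' z₁ := fiber_reachable heH (by rw [hx, hz1])
        have hadj1 : H.Adj z₁ x₁ := ((SimpleGraph.mem_edgeSet _).mp hfH).symm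
        exact r1.trans (hadj1.reachable.trans (ih hrest x₁ y' hx1 hy))

lemma exists_rep_of_mem_edgeSet {G : SimpleGraph V} {a b : V} {g : Sym2 V}
    (hg : g ∈ (contractGraph G a b).edgeSet) :
    ∃ f ∈ G.edgeSet, f ≠ s(a, b) ∧ Sym2.map (contractMap a b) f = g := by
  revert hg
  induction g using Sym2.ind with
  | _ x y => exact fun hg => ((SimpleGraph.mem_edgeSet _).mp hg).2

lemma exists_max_rep {V : Type*} [Fintype V] [DecidableEq V] [LinearOrder (Sym2 V)]
    (G : SimpleGraph V) (a b : V) {g : Sym2 V} (hg : ¬ g.IsDiag)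
    (hex : ∃ f ∈ G.edgeSet, f ≠ s(a, b) ∧ Sym2.map (contractMap a b) f = g) :
    ∃ f, IsContractEdge G s(a, b) f ∧ Sym2.map (contractMap a b) f = g := by
  classical
  set F : Set (Sym2 V) :=
    {f | f ∈ G.edgeSet ∧ f ≠ s(a, b) ∧ Sym2.map (contractMap a b) f = g} with hF
  have hFne : F.Nonempty := by
    obtain ⟨f, h1, h2, h3⟩ := hex; exact ⟨f, h1, h2, h3⟩
  obtain ⟨f0, hf0, hmax⟩ := Set.Finite.exists_maximalFor id F (Set.toFinite F) hFne
  refine ⟨f0, ⟨hf0.1, hf0.2.1, ?_⟩, hf0.2.2⟩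
  intro h hlt htri
  obtain ⟨x, y, z, axy, ayz, azx, heq, hfeq, hheq⟩ := htri
  have hcx : contractMap a b x = a ∧ contractMap a b y = a := by
    rcases Sym2.eq_iff.mp heq.symm with ⟨h1, h2⟩ | ⟨h1, h2⟩
    · rw [h1, h2]; exact ⟨contractMap_a a b, contractMap_b a b⟩
    · rw [h1, h2]; exact ⟨contractMap_b a b, contractMap_a a b⟩
  have hmapf : Sym2.map (contractMap a b) f0 = s(contractMap a b z, a) := by
    rw [hfeq, Sym2.map_pair_eq, hcx.2, Sym2.eq_swap]
  have hhne : h ≠ s(a, b) := by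
    intro hh
    apply hg
    rw [← hf0.2.2, hmapf]
    have : Sym2.map (contractMap a b) h = s(a, a) := by
      rw [hh, Sym2.map_pair_eq, contractMap_a, contractMap_b]
    rw [hheq, Sym2.map_pair_eq, hcx.1] at this
    rw [Sym2.eq_iff] at this
    rcases this with ⟨h1, _⟩ | ⟨h1, _⟩ <;> rw [h1] <;> exact Sym2.mk_isDiag_iff.mpr rfl
  have hmaph : Sym2.map (contractMap a b) h = s(contractMap a b z, a) := by
    rw [hheq, Sym2.map_pair_eq, hcx.1]
  have hhF : h ∈ F :=
    ⟨hheq ▸ (SimpleGraph.mem_edgeSet _).mpr azx, hhne, by rw [hmaph, ← hmapf, hf0.2.2]⟩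
  exact absurd (hmax hhF hlt.le) (not_le.mpr hlt)

end Aux

/-- If `e = s(a, b)` is the minimum edge of a finite simple graph `G`, `X ⊆ E(G)`
with `e ∈ X`, and `X` includes no broken circuit of `G`, then `X \ {e}` includes no
broken circuit of the contraction `G|ₑ`. -/
theorem contraction_no_broken_circuit {V : Type*} [Fintype V] [DecidableEq V]
    [LinearOrder (Sym2 V)] (G : SimpleGraph V) (a b : V) (e : Sym2 V)
    (hab : e = s(a, b)) (he : e ∈ G.edgeSet) (hmin : ∀ f ∈ G.edgeSet, e ≤ f)
    (X : Set (Sym2 V)) (hX : X ⊆ G.edgeSet) (heX : e ∈ X)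
    (hnb : ¬ ∃ B, IsBrokenCircuit G B ∧ B ⊆ X) :
    ¬ ∃ B, IsContractBrokenCircuit G a b B ∧ B ⊆ X \ {e} := by
  classical
  subst hab
  rintro ⟨B, ⟨u, w, hw, S, hS, fm, hfmS, hfmmax, hBdef⟩, hBX⟩
  have hneab : a ≠ b := ((SimpleGraph.mem_edgeSet _).mp he).ne
  have hrepS : ∀ g ∈ w.edges, ∃ f ∈ S, Sym2.map (contractMap a b) f = g := by
    intro g hg
    have hgE : g ∈ (contractGraph G a b).edgeSet := w.edges_subset_edgeSet hg
    have hgd : ¬ g.IsDiag := SimpleGraph.not_isDiag_of_mem_edgeSet _ hgE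
    obtain ⟨f, hf1, hf2⟩ := exists_max_rep G a b hgd (exists_rep_of_mem_edgeSet hgE)
    exact ⟨f, (hS f).mpr ⟨hf1, by rw [hf2]; exact hg⟩, hf2⟩
  have hSsub : S ⊆ G.edgeSet := fun f hf => ((hS f).mp hf).1.1
  have hSne : ∀ f ∈ S, f ≠ s(a, b) := fun f hf => ((hS f).mp hf).1.2.1
  cases w with
  | nil => exact hw.ne_nil rfl
  | @cons _ v _ hadj p =>
    have hg0w : s(u, v) ∈ (SimpleGraph.Walk.cons hadj p).edges := by simp
    have hg0p : s(u, v) ∉ p.edges := by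
      have hnd := hw.edges_nodup
      rw [SimpleGraph.Walk.edges_cons, List.nodup_cons] at hnd
      exact hnd.1
    obtain ⟨f₀, hf₀S, hf₀map⟩ := hrepS _ hg0w
    revert hf₀S hf₀map
    induction f₀ using Sym2.ind with
    | _ u₁ v₁ =>
    intro hf₀S hf₀map
    rw [Sym2.map_pair_eq] at hf₀map
    set A : Set (Sym2 V) := S ∪ {s(a, b)} with hA
    have hAG : A ⊆ G.edgeSet := by
      rintro f (hf | hf)
      · exact hSsub hf
      · rw [Set.mem_singleton_iff] at hf; rw [hf]; exact he
    set Hf := SimpleGraph.fromEdgeSet A with hHf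
    set H₀ := SimpleGraph.fromEdgeSet ((S \ {s(u₁, v₁)}) ∪ {s(a, b)}) with hH₀
    have heH₀ : H₀.Adj a b := by
      rw [hH₀, SimpleGraph.fromEdgeSet_adj]
      exact ⟨Or.inr rfl, hneab⟩
    have hrep0 : ∀ g ∈ p.edges, ∃ f ∈ H₀.edgeSet, Sym2.map (contractMap a b) f = g := by
      intro g hg
      obtain ⟨f, hfS, hfmap⟩ := hrepS g (by simp [hg])
      refine ⟨f, ?_, hfmap⟩
      rw [hH₀, SimpleGraph.edgeSet_fromEdgeSet]
      refine ⟨Or.inl ⟨hfS, ?_⟩, SimpleGraph.not_isDiag_of_mem_edgeSet G (hSsub hfS)⟩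
      rw [Set.mem_singleton_iff]
      intro hff
      apply hg0p
      have : Sym2.map (contractMap a b) s(u₁, v₁) = g := by rw [← hff, hfmap]
      rw [Sym2.map_pair_eq, hf₀map] at this
      rwa [← this] at hg
    have hle : H₀ ≤ Hf \ SimpleGraph.fromEdgeSet {s(u₁, v₁)} := by
      intro x y hxy
      rw [hH₀, SimpleGraph.fromEdgeSet_adj] at hxy
      obtain ⟨hmem, hne⟩ := hxy
      have hxyne : s(x, y) ≠ s(u₁, v₁) := by
        rcases hmem with ⟨_, hnf⟩ | hf
        · exact hnf
        · rw [Set.mem_singleton_iff] at hf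
          rw [hf]
          exact fun hc => hSne _ hf₀S hc.symm
      constructor
      · rw [hHf, SimpleGraph.fromEdgeSet_adj]
        refine ⟨?_, hne⟩
        rcases hmem with ⟨hf, _⟩ | hf
        · exact Or.inl hf
        · exact Or.inr hf
      · rw [SimpleGraph.fromEdgeSet_adj]
        rintro ⟨hc, -⟩
        exact hxyne (Set.mem_singleton_iff.mp hc)
    have hreach : (Hf \ SimpleGraph.fromEdgeSet {s(u₁, v₁)}).Reachable u₁ v₁ := by
      rcases Sym2.eq_iff.mp hf₀map with ⟨h1, h2⟩ | ⟨h1, h2⟩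
      · exact ((lift_reachable heH₀ p hrep0 v₁ u₁ h2 h1).mono hle).symm
      · exact (lift_reachable heH₀ p hrep0 u₁ v₁ h1 h2).mono hle
    have hadjHf : Hf.Adj u₁ v₁ := by
      rw [hHf, SimpleGraph.fromEdgeSet_adj]
      refine ⟨Or.inl hf₀S, ?_⟩
      intro hc
      rcases Sym2.eq_iff.mp hf₀map with ⟨h1, h2⟩ | ⟨h1, h2⟩ <;>
        exact hadj.ne (by rw [← h1, ← h2, hc]) <;> exact hadj.ne (by rw [← h1, ← h2, hc])
    obtain ⟨u', q', hq', hfq'⟩ :=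
      (SimpleGraph.adj_and_reachable_delete_edges_iff_exists_cycle).mp ⟨hadjHf, hreach⟩
    have hq'A : ∀ g ∈ q'.edges, g ∈ A := by
      intro g hg
      have := q'.edges_subset_edgeSet hg
      rw [hHf, SimpleGraph.edgeSet_fromEdgeSet] at this
      exact this.1
    have hq'E : ∀ g ∈ q'.edges, g ∈ G.edgeSet := fun g hg => hAG (hq'A g hg)
    set q := q'.transfer G hq'E with hq
    have hqc : q.IsCycle := hq'.transfer hq'E
    have hqe : q.edges = q'.edges := q'.edges_transfer hq'E
    have hTne : q.edges.toFinset.Nonempty :=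
      ⟨s(u₁, v₁), by rw [List.mem_toFinset, hqe]; exact hfq'⟩
    set fm' := q.edges.toFinset.max' hTne with hfm'
    have hfm'mem : fm' ∈ q.edges := List.mem_toFinset.mp (q.edges.toFinset.max'_mem hTne)
    have hfm'max : ∀ g ∈ q.edges, g ≤ fm' :=
      fun g hg => q.edges.toFinset.le_max' g (List.mem_toFinset.mpr hg)
    apply hnb
    refine ⟨{g | g ∈ q.edges} \ {fm'}, ⟨u', q, hqc, fm', hfm'mem, hfm'max, rfl⟩, ?_⟩
    rintro g ⟨hgq, hgne⟩
    rw [Set.mem_setOf_eq] at hgq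
    rw [Set.mem_singleton_iff] at hgne
    have hgA : g ∈ A := by rw [hqe] at hgq; exact hq'A g hgq
    rcases hgA with hgS | hge
    · have hgfm : g ≠ fm := by
        intro hgf
        subst hgf
        have h1 : g ≤ fm' := hfm'max g hgq
        have h2 : fm' ≤ g := by
          have hfm'A : fm' ∈ A := by rw [hqe] at hfm'mem; exact hq'A _ hfm'mem
          rcases hfm'A with h | h
          · exact hfmmax _ h
          · rw [Set.mem_singleton_iff] at h
            rw [h]
            exact hmin g (hSsub hgS)
        exact hgne (le_antisymm h1 h2)
      have hgB : g ∈ B := by rw [hBdef]; exact ⟨hgS, hgfm⟩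
      exact (hBX hgB).1
    · rw [Set.mem_singleton_iff] at hge
      rw [hge]
      exact heX
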